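/- If a term t is head normalizing with head normal form h = λx₁.…λxₚ. x t₁…t_q (so t →β* h), then t is typable in system R₀ with a type of order exactly p: there exist Γ, types A₁,…,Aₚ and an atom o such that Γ ⊢ t : A₁ → ⋯ → Aₚ → o. -/
import Mathlib


inductive Term : Type
  | var : ℕ → Term
  | lam : Term → Term
  | app : Term → Term → Term
  deriving DecidableEq

/-- de Bruijn shifting: `Term.shift d c t` adds `d` to every variable of `t` that is `≥ c`. -/
def Term.shift (d : ℕ) : ℕ → Term → Term
  | c, .var n => if n < c then .var n else .var (n + d)
  | c, .lam t => .lam (Term.shift d (c + 1) t)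
  | c, .app t u => .app (Term.shift d c t) (Term.shift d c u)

/-- Capture-avoiding substitution: `Term.subst k s t` substitutes `s` for variable `k` in `t`. -/
def Term.subst : ℕ → Term → Term → Term
  | k, s, .var n => if n < k then .var n else if n = k then Term.shift k 0 s else .var (n - 1)
  | k, s, .lam b => .lam (Term.subst (k + 1) s b)
  | k, s, .app t u => .app (Term.subst k s t) (Term.subst k s u)

/-- One-step β-reduction. -/
inductive Beta : Term → Term → Prop
  | beta (b a : Term) : Beta (.app (.lam b) a) (Term.subst 0 a b)
  | appL {t t'} (u : Term) : Beta t t' → Beta (.app t u) (.app t' u)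
  | appR (t : Term) {u u'} : Beta u u' → Beta (.app t u) (.app t u')
  | lam {t t'} : Beta t t' → Beta (.lam t) (.lam t')

/-- Types of the non-idempotent intersection type system R₀:
`τ ::= o | M → τ` where `M` is a finite multiset of types (represented as a list). -/
inductive RTy : Type
  | atom : ℕ → RTy
  | arr : List RTy → RTy → RTy

/-- Contexts map (de Bruijn) variables to finite multisets of types. -/
abbrev RCtx : Type := ℕ → Multiset RTy

/-- The relevant context assigning exactly `[τ]` to variable `n` and `[]` elsewhere. -/
def RCtx.single (n : ℕ) (τ : RTy) : RCtx := fun m => if m = n then {τ} else 0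

/-- Extend a context with a multiset for the newly bound variable 0. -/
def pushR (Γ : RCtx) (M : Multiset RTy) : RCtx := fun n =>
  match n with
  | 0 => M
  | n + 1 => Γ n

/-- The Gardner–de Carvalho system R₀ (relevant, non-idempotent intersection types). -/
inductive RTyping : RCtx → Term → RTy → Prop
  | var (n : ℕ) (τ : RTy) : RTyping (RCtx.single n τ) (.var n) τ
  | abs {Γ t τ} (M : List RTy) :
      RTyping (pushR Γ (↑M : Multiset RTy)) t τ → RTyping Γ (.lam t) (.arr M τ)
  | app {Γ t u τ} (M : List RTy) (Δs : List (RCtx × RTy)) :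
      RTyping Γ t (.arr M τ) → Δs.map Prod.snd = M →
      (∀ p ∈ Δs, RTyping p.1 u p.2) →
      RTyping (Γ + (Δs.map Prod.fst).sum) (.app t u) τ

/-- Iterated application `h t₁ … t_q`. -/
def mkApps (h : Term) (ts : List Term) : Term := ts.foldl Term.app h

/-- The arrow type `M₁ → ⋯ → Mₚ → τ` (a type of order `p` when `τ` is an atom). -/
def mkArrs (Ms : List (List RTy)) (τ : RTy) : RTy := Ms.foldr RTy.arr τ

/-! ### Auxiliary machinery -/

/-- Delete position `c` from a context (inverse of weakening at `c`). -/
def delAt (c : ℕ) (Γ : RCtx) : RCtx := fun n => if n < c then Γ n else Γ (n + 1)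

/-- Insert multiset `M` at position `k` in a context. -/
def insAt (k : ℕ) (M : Multiset RTy) (Γ : RCtx) : RCtx :=
  fun n => if n < k then Γ n else if n = k then M else Γ (n - 1)

lemma ctx_congr {Γ Γ' : RCtx} {t : Term} {τ : RTy} (h : RTyping Γ t τ)
    (e : ∀ n, Γ n = Γ' n) : RTyping Γ' t τ := by
  rwa [show Γ = Γ' from funext e] at h

lemma list_sum_apply (l : List RCtx) (n : ℕ) :
    l.sum n = (l.map (fun Γ => Γ n)).sum := by
  induction l with
  | nil => rfl
  | cons a l ih => simp [List.sum_cons, Pi.add_apply, ih]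

lemma shift_zero (t : Term) : ∀ c, Term.shift 0 c t = t := by
  induction t with
  | var n => intro c; simp [Term.shift]
  | lam b ih => intro c; simp [Term.shift, ih]
  | app a b iha ihb => intro c; simp [Term.shift, iha, ihb]

lemma shift_shift (a b : ℕ) (t : Term) : ∀ c,
    Term.shift a c (Term.shift b c t) = Term.shift (a + b) c t := by
  induction t with
  | var n =>
    intro c
    by_cases h : n < c
    · simp [Term.shift, h]
    · simp only [Term.shift, if_neg h]
      rw [if_neg (by omega)]
      congr 1; omega
  | lam t ih => intro c; simp [Term.shift, ih]
  | app t u iht ihu => intro c; simp [Term.shift, iht, ihu]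

lemma insAt_add (k : ℕ) (M₁ M₂ : Multiset RTy) (Γ₁ Γ₂ : RCtx) :
    insAt k M₁ Γ₁ + insAt k M₂ Γ₂ = insAt k (M₁ + M₂) (Γ₁ + Γ₂) := by
  funext n
  simp only [insAt, Pi.add_apply]
  split_ifs <;> rfl

/-- Anti-weakening: a typing of a 1-shifted term uses nothing at position `c`
and yields a typing of the original term in the contracted context. -/
lemma antiShift : ∀ (u : Term) (c : ℕ) (Δ : RCtx) (σ : RTy),
    RTyping Δ (Term.shift 1 c u) σ → Δ c = 0 ∧ RTyping (delAt c Δ) u σ := by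
  intro u
  induction u with
  | var n =>
    intro c Δ σ h
    by_cases hn : n < c
    · rw [show Term.shift 1 c (.var n) = .var n by simp [Term.shift, hn]] at h
      cases h
      refine ⟨by simp [RCtx.single]; omega, ?_⟩
      refine ctx_congr (RTyping.var n σ) ?_
      intro m
      simp only [delAt, RCtx.single]
      split_ifs <;> first | rfl | omega
    · rw [show Term.shift 1 c (.var n) = .var (n + 1) by simp [Term.shift, hn]] at h
      cases h
      refine ⟨by simp [RCtx.single]; omega, ?_⟩
      refine ctx_congr (RTyping.var n σ) ?_
      intro m
      simp only [delAt, RCtx.single]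
      split_ifs <;> first | rfl | omega
  | lam b ih =>
    intro c Δ σ h
    rw [show Term.shift 1 c (.lam b) = .lam (Term.shift 1 (c + 1) b) from rfl] at h
    cases h with
    | abs M hb =>
      obtain ⟨h0, hb'⟩ := ih (c + 1) _ _ hb
      refine ⟨h0, RTyping.abs M (ctx_congr hb' ?_)⟩
      intro n
      match n with
      | 0 => simp [delAt, pushR]
      | m + 1 =>
        by_cases hm : m < c
        · simp [delAt, pushR, hm, Nat.succ_lt_succ_iff]
        · simp [delAt, pushR, hm, Nat.succ_lt_succ_iff]
  | app a b iha ihb =>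
    intro c Δ σ h
    rw [show Term.shift 1 c (.app a b)
        = .app (Term.shift 1 c a) (Term.shift 1 c b) from rfl] at h
    cases h with
    | app M Δs ha hsnd hall =>
      rename_i Γ₀
      obtain ⟨ha0, ha'⟩ := iha c _ _ ha
      have hb' : ∀ q ∈ Δs, q.1 c = 0 ∧ RTyping (delAt c q.1) b q.2 :=
        fun q hq => ihb c _ _ (hall q hq)
      constructor
      · show _ + _ = (0 : Multiset RTy)
        rw [ha0, list_sum_apply, zero_add]
        apply List.sum_eq_zero
        intro x hx
        simp only [List.map_map, List.mem_map] at hx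
        obtain ⟨q, hq, rfl⟩ := hx
        exact (hb' q hq).1
      · have happ : RTyping
            (delAt c Γ₀ + ((Δs.map (fun q => (delAt c q.1, q.2))).map Prod.fst).sum)
            (.app a b) σ :=
          RTyping.app M (Δs.map (fun q => (delAt c q.1, q.2))) ha'
            (by rw [List.map_map]; exact hsnd)
            (by intro q hq
                simp only [List.mem_map] at hq
                obtain ⟨q', hq', rfl⟩ := hq
                exact (hb' q' hq').2)
        refine ctx_congr happ ?_
        intro n
        simp only [Pi.add_apply, delAt, List.map_map]
        by_cases hn : n < c
        · simp only [if_pos hn]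
          congr 1
          rw [list_sum_apply, list_sum_apply]
          simp only [List.map_map]
          congr 1
          apply List.map_congr_left
          intro q _; simp [delAt, hn, Function.comp]
        · simp only [if_neg hn]
          congr 1
          rw [list_sum_apply, list_sum_apply]
          simp only [List.map_map]
          congr 1
          apply List.map_congr_left
          intro q _; simp [delAt, hn, Function.comp]

/-- Anti-substitution lemma for R₀. -/
lemma antiSubst (s : Term) : ∀ (t : Term) (k : ℕ) (Γ : RCtx) (τ : RTy),
    RTyping Γ (Term.subst k s t) τ →
    ∃ (Γ₁ : RCtx) (L : List (RCtx × RTy)),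
      Γ = Γ₁ + (L.map Prod.fst).sum ∧
      RTyping (insAt k (↑(L.map Prod.snd) : Multiset RTy) Γ₁) t τ ∧
      ∀ q ∈ L, RTyping q.1 (Term.shift k 0 s) q.2 := by
  intro t
  induction t with
  | var n =>
    intro k Γ τ h
    by_cases h1 : n < k
    · rw [show Term.subst k s (.var n) = .var n by simp [Term.subst, h1]] at h
      cases h
      refine ⟨RCtx.single n τ, [], by simp, ?_, by simp⟩
      refine ctx_congr (RTyping.var n τ) ?_
      intro m
      simp only [insAt, RCtx.single, List.map_nil]
      split_ifs <;> first | rfl | omega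
    · by_cases h2 : n = k
      · subst h2
        rw [show Term.subst n s (.var n) = Term.shift n 0 s by
          simp [Term.subst]] at h
        refine ⟨0, [(Γ, τ)], by simp, ?_, by simpa using h⟩
        refine ctx_congr (RTyping.var n τ) ?_
        intro m
        simp only [insAt, RCtx.single, List.map_cons, List.map_nil]
        split_ifs <;> first | rfl | omega
      · rw [show Term.subst k s (.var n) = .var (n - 1) by
          simp [Term.subst, h1, h2]] at h
        cases h
        refine ⟨RCtx.single (n - 1) τ, [], by simp, ?_, by simp⟩
        refine ctx_congr (RTyping.var n τ) ?_
        intro m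
        simp only [insAt, RCtx.single, List.map_nil]
        split_ifs <;> first | rfl | omega
  | lam b ih =>
    intro k Γ τ h
    rw [show Term.subst k s (.lam b) = .lam (Term.subst (k + 1) s b) from rfl] at h
    cases h with
    | abs M hb =>
      obtain ⟨Γ₁', L', hΓ, hb', hL'⟩ := ih (k + 1) _ _ hb
      have hL'0 : ∀ q ∈ L', q.1 0 = 0 ∧ RTyping (delAt 0 q.1) (Term.shift k 0 s) q.2 := by
        intro q hq
        have := hL' q hq
        rw [show Term.shift (k + 1) 0 s = Term.shift 1 0 (Term.shift k 0 s) by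
          rw [shift_shift]; congr 1; omega] at this
        exact antiShift _ 0 _ _ this
      have hsum0 : (L'.map Prod.fst).sum 0 = 0 := by
        rw [list_sum_apply]
        apply List.sum_eq_zero
        intro x hx
        simp only [List.map_map, List.mem_map] at hx
        obtain ⟨q, hq, rfl⟩ := hx
        exact (hL'0 q hq).1
      have hΓ1'0 : Γ₁' 0 = (↑M : Multiset RTy) := by
        have := congrFun hΓ 0
        simp only [pushR, Pi.add_apply, hsum0, add_zero] at this
        exact this.symm
      refine ⟨delAt 0 Γ₁', L'.map (fun q => (delAt 0 q.1, q.2)), ?_, ?_, ?_⟩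
      · funext n
        have := congrFun hΓ (n + 1)
        simp only [pushR, Pi.add_apply] at this
        rw [Pi.add_apply, show delAt 0 Γ₁' n = Γ₁' (n + 1) by simp [delAt], this]
        congr 1
        rw [list_sum_apply, list_sum_apply]
        simp only [List.map_map]
        congr 1 <;> (apply List.map_congr_left; intro q _; simp [delAt, Function.comp])
      · refine RTyping.abs M (ctx_congr hb' ?_)
        intro n
        match n with
        | 0 => simp [insAt, pushR, hΓ1'0]
        | m + 1 =>
          simp only [insAt, pushR, List.map_map]
          by_cases hm : m < k
          · rw [if_pos (by omega), if_pos hm]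
            simp [delAt]
          · by_cases hm2 : m = k
            · subst hm2
              rw [if_neg (by omega), if_pos rfl, if_neg (by omega), if_pos rfl]
              rfl
            · rw [if_neg (by omega), if_neg (by omega), if_neg hm, if_neg hm2]
              simp only [delAt]
              rw [if_neg (by omega)]
              congr 1
              omega
      · intro q hq
        simp only [List.mem_map] at hq
        obtain ⟨q', hq', rfl⟩ := hq
        exact (hL'0 q' hq').2
  | app t₁ t₂ iht₁ iht₂ =>
    intro k Γ τ h
    rw [show Term.subst k s (.app t₁ t₂)
        = .app (Term.subst k s t₁) (Term.subst k s t₂) from rfl] at h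
    cases h with
    | app M Δs ht₁ hsnd hall =>
      obtain ⟨A, L₁, hA, ht₁', hL₁⟩ := iht₁ k _ _ ht₁
      have hlist : ∀ (Δs : List (RCtx × RTy)),
          (∀ q ∈ Δs, RTyping q.1 (Term.subst k s t₂) q.2) →
          ∃ (C : RCtx) (Δs' L : List (RCtx × RTy)),
            Δs'.map Prod.snd = Δs.map Prod.snd ∧
            (∀ q ∈ Δs', RTyping q.1 t₂ q.2) ∧
            (∀ q ∈ L, RTyping q.1 (Term.shift k 0 s) q.2) ∧
            (Δs.map Prod.fst).sum = C + (L.map Prod.fst).sum ∧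
            (Δs'.map Prod.fst).sum = insAt k (↑(L.map Prod.snd) : Multiset RTy) C := by
        intro Δs
        induction Δs with
        | nil =>
          intro _
          refine ⟨0, [], [], rfl, by simp, by simp, by simp, ?_⟩
          funext n
          simp only [List.map_nil, List.sum_nil, insAt]
          split_ifs <;> rfl
        | cons q Δs ihq =>
          intro hq
          obtain ⟨B, Lq, hB, hqty, hLq⟩ := iht₂ k q.1 q.2 (hq q (by simp))
          obtain ⟨C, Δs', L, h1, h2, h3, h4, h5⟩ := ihq (fun r hr => hq r (by simp [hr]))
          refine ⟨B + C, (insAt k (↑(Lq.map Prod.snd) : Multiset RTy) B, q.2) :: Δs',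
            Lq ++ L, by simp [h1], ?_, ?_, ?_, ?_⟩
          · intro r hr
            rcases List.mem_cons.mp hr with h | h
            · subst h; exact hqty
            · exact h2 r h
          · intro r hr
            rcases List.mem_append.mp hr with h | h
            · exact hLq r h
            · exact h3 r h
          · simp only [List.map_cons, List.sum_cons, List.map_append, List.sum_append, hB, h4]
            abel
          · simp only [List.map_cons, List.sum_cons, List.map_append, h5, insAt_add]
            congr 1 <;> simp
      obtain ⟨C, Δs', L₂, h1, h2, h3, h4, h5⟩ := hlist Δs hall
      refine ⟨A + C, L₁ ++ L₂, ?_, ?_, ?_⟩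
      · rw [hA, h4, List.map_append, List.sum_append]
        abel
      · have happ := RTyping.app M Δs' ht₁' (h1.trans hsnd) h2
        rw [h5, insAt_add] at happ
        rw [show ((↑((L₁ ++ L₂).map Prod.snd)) : Multiset RTy)
            = ↑(L₁.map Prod.snd) + ↑(L₂.map Prod.snd) by simp]
        exact happ
      · intro r hr
        rcases List.mem_append.mp hr with h | h
        · exact hL₁ r h
        · exact h3 r h

/-- Subject expansion for one β-step. -/
lemma expand_step {t t' : Term} (hb : Beta t t') :
    ∀ Γ τ, RTyping Γ t' τ → RTyping Γ t τ := by
  induction hb with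
  | beta b a =>
    intro Γ τ h
    obtain ⟨Γ₁, L, hΓ, hb', hs⟩ := antiSubst a b 0 Γ τ h
    have habs : RTyping Γ₁ (.lam b) (.arr (L.map Prod.snd) τ) := by
      refine RTyping.abs _ (ctx_congr hb' ?_)
      intro n
      match n with
      | 0 => simp [insAt, pushR]
      | m + 1 => simp [insAt, pushR]
    have happ : RTyping (Γ₁ + (L.map Prod.fst).sum) (.app (.lam b) a) τ :=
      RTyping.app (L.map Prod.snd) L habs rfl
        (fun q hq => by rw [← shift_zero a 0]; exact hs q hq)
    rwa [← hΓ] at happ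
  | appL u _ ih =>
    intro Γ τ h
    cases h with
    | app M Δs h1 h2 h3 => exact RTyping.app M Δs (ih _ _ h1) h2 h3
  | appR t _ ih =>
    intro Γ τ h
    cases h with
    | app M Δs h1 h2 h3 =>
      exact RTyping.app M Δs h1 h2 (fun q hq => ih _ _ (h3 q hq))
  | lam _ ih =>
    intro Γ τ h
    cases h with
    | abs M hb => exact RTyping.abs M (ih _ _ hb)

/-- Subject expansion along a reduction sequence. -/
lemma expand_star {t t' : Term} (h : Relation.ReflTransGen Beta t t') :
    ∀ Γ τ, RTyping Γ t' τ → RTyping Γ t τ := by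
  induction h with
  | refl => exact fun _ _ h => h
  | tail _ hbc ih => exact fun Γ τ h => ih Γ τ (expand_step hbc Γ τ h)

lemma apps_typable : ∀ (ts : List Term) (Γ : RCtx) (t : Term) (τ : RTy),
    RTyping Γ t (mkArrs (List.replicate ts.length []) τ) →
    RTyping Γ (mkApps t ts) τ := by
  intro ts
  induction ts with
  | nil => intro Γ t τ h; exact h
  | cons u ts ih =>
    intro Γ t τ h
    have h' : RTyping Γ t (.arr [] (mkArrs (List.replicate ts.length []) τ)) := h
    have happ : RTyping (Γ + (([] : List (RCtx × RTy)).map Prod.fst).sum) (.app t u)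
        (mkArrs (List.replicate ts.length []) τ) :=
      RTyping.app ([] : List RTy) ([] : List (RCtx × RTy)) h' rfl
        (by intro q hq; simp at hq)
    simp only [List.map_nil, List.sum_nil, add_zero] at happ
    exact ih Γ (.app t u) τ happ

lemma lam_iter : ∀ (p : ℕ) (t : Term) (Γ : RCtx) (τ : RTy), RTyping Γ t τ →
    ∃ (Δ : RCtx) (Ms : List (List RTy)), Ms.length = p ∧
      RTyping Δ (Term.lam^[p] t) (mkArrs Ms τ) := by
  intro p
  induction p with
  | zero => intro t Γ τ h; exact ⟨Γ, [], rfl, h⟩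
  | succ p ih =>
    intro t Γ τ h
    obtain ⟨Δ, Ms, hlen, hty⟩ := ih t Γ τ h
    refine ⟨delAt 0 Δ, (Δ 0).toList :: Ms, by simp [hlen], ?_⟩
    rw [Function.iterate_succ_apply']
    refine RTyping.abs _ (ctx_congr hty ?_)
    intro n
    match n with
    | 0 => simp [pushR]
    | m + 1 => simp [pushR, delAt]

/-- If `t` head normalizes to `h = λx₁.…λxₚ. x t₁…t_q`, then `t` is typable in R₀
with a type of order exactly `p`. -/
theorem hn_term_typable_with_type_of_its_order (t : Term) (p : ℕ) (x : ℕ)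
    (ts : List Term)
    (h : Relation.ReflTransGen Beta t (Term.lam^[p] (mkApps (.var x) ts))) :
    ∃ (Γ : RCtx) (o : ℕ) (Ms : List (List RTy)), Ms.length = p ∧
      RTyping Γ t (mkArrs Ms (.atom o)) := by
  set T : RTy := mkArrs (List.replicate ts.length []) (.atom 0) with hT
  have hvar : RTyping (RCtx.single x T) (.var x) T := RTyping.var x T
  have happs : RTyping (RCtx.single x T) (mkApps (.var x) ts) (.atom 0) :=
    apps_typable ts _ _ _ hvar
  obtain ⟨Δ, Ms, hlen, hty⟩ := lam_iter p _ _ _ happs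
  exact ⟨Δ, 0, Ms, hlen, expand_star h Δ _ hty⟩
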